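/- arXiv:1905.09985 — 3 statements merged into one kernel-verified Lean document; each statement's English description precedes it below -/
import Mathlib

section
/- Let D = (V, A) be a strongly connected digraph and A' ⊆ A such that for every vertex v ∈ V, if some arc of A' leaves v then all arcs of A entering v are in A'. If any arc of A' enters some vertex w, then all arcs of A entering w are in A'. -/
def StronglyConnected {V : Type*} (A : Set (V × V)) : Prop :=
  ∀ u v : V, Relation.ReflTransGen (fun a b => (a, b) ∈ A) u v

/-- In a strongly connected digraph with closure property (a vertex with a triggered
leaving arc has all entering arcs triggered): if some triggered arc enters `w`, then
all arcs of `A` entering `w` are triggered. -/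
theorem stmt4 {V : Type*} [Fintype V] (A A' : Set (V × V))
    (hsc : StronglyConnected A)
    (hsub : A' ⊆ A)
    (hclosure : ∀ v : V, (∃ w, (v, w) ∈ A') → ∀ u, (u, v) ∈ A → (u, v) ∈ A')
    (w : V) (hw : ∃ u, (u, w) ∈ A') :
    ∀ x, (x, w) ∈ A → (x, w) ∈ A' := by
  obtain ⟨u, hu⟩ := hw
  -- propagate "has leaving A'-arc" backward along paths
  have key : ∀ a b : V, Relation.ReflTransGen (fun a b => (a, b) ∈ A) a b →
      (∃ x, (b, x) ∈ A') → (∃ x, (a, x) ∈ A') := by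
    intro a b h hb
    induction h using Relation.ReflTransGen.head_induction_on with
    | refl => exact hb
    | head hac _ ih =>
        obtain ⟨x, hx⟩ := ih
        exact ⟨_, hclosure _ ⟨x, hx⟩ _ hac⟩
  have hwS : ∃ x, (w, x) ∈ A' := key w u (hsc w u) ⟨w, hu⟩
  intro x hx
  exact hclosure w hwS x hx
end

section
/- Define for a digraph D = (V,A) and a set A' ⊆ A of triggered arcs the exception value exp(A', v) = −∞ if there exist arcs (u,v) ∈ A \ A' and (v,w) ∈ A', and exp(A', v) = 0 otherwise. If D is strongly connected and A' is such that every vertex has finite exception value (i.e., no vertex v has a triggered leaving arc while some entering arc is untriggered) and A' is nonempty, then A' = A. -/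
open Classical in
/-- The exception value of `v` for triggered arc set `A'`: `⊥` (i.e. `−∞`) if some
arc entering `v` is untriggered while some arc leaving `v` is triggered, else `0`. -/
noncomputable def excVal {V : Type*} (A A' : Set (V × V)) (v : V) : EReal :=
  if (∃ u, (u, v) ∈ A \ A') ∧ (∃ w, (v, w) ∈ A') then ⊥ else 0

/-- If `D` is strongly connected and every vertex has finite exception value (no one
is "under water"), then a nonempty triggered arc set `A' ⊆ A` must equal `A`. -/
theorem stmt7 {V : Type*} [Fintype V] (A A' : Set (V × V))
    (hsc : StronglyConnected A)
    (hsub : A' ⊆ A)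
    (hfin : ∀ v : V, excVal A A' v ≠ ⊥)
    (hne : A'.Nonempty) :
    A' = A := by
  -- key: if v has a triggered outgoing arc, all entering arcs of v are triggered
  have key : ∀ v : V, (∃ w, (v, w) ∈ A') → ∀ u, (u, v) ∈ A → (u, v) ∈ A' := by
    intro v hv u hu
    have h := hfin v
    unfold excVal at h
    by_contra hcon
    exact h (if_pos ⟨⟨u, hu, hcon⟩, hv⟩)
  obtain ⟨⟨a, b⟩, hab⟩ := hne
  -- every vertex with a path to a has a triggered outgoing arc
  have prop : ∀ y : V, Relation.ReflTransGen (fun p q => (p, q) ∈ A) y a →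
      ∃ w, (y, w) ∈ A' := by
    intro y hy
    induction hy using Relation.ReflTransGen.head_induction_on with
    | refl => exact ⟨b, hab⟩
    | head harc _ ih => exact ⟨_, key _ ih _ harc⟩
  apply Set.Subset.antisymm hsub
  rintro ⟨x, y⟩ hxy
  exact key y (prop y (hsc y a)) x hxy
end

section
/- In the signature-counting scheme, the signature of a party v is never included among the signatures used to trigger the first-triggered leaving arc of v; formally, if each party reveals its signature only upon triggering its entering arcs, and each party triggers its entering arcs only after one of its leaving arcs is triggered, then in any execution the set of signatures attached to the first-triggered leaving arc of v excludes v's signature. -/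
/-- The signature of a conforming party `v` never appears in the first-triggered
leaving arc of `v`: if `v`'s signature appears in an event only strictly after some
event triggering a leaving arc of `v`, then the earliest event on a leaving arc of
`v` does not carry `v`'s signature. -/
theorem stmt10 {V : Type*} (E : Type*)
    (time : E → ℝ) (arc : E → V × V) (sigs : E → Finset V) (v : V)
    (hconform : ∀ e : E, v ∈ sigs e → ∃ e' : E, (arc e').1 = v ∧ time e' < time e)
    (efirst : E) (hleaving : (arc efirst).1 = v)
    (hearliest : ∀ e' : E, (arc e').1 = v → time efirst ≤ time e') :
    v ∉ sigs efirst := by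
  intro h
  obtain ⟨e', h1, h2⟩ := hconform efirst h
  exact absurd (hearliest e' h1) (not_le.mpr h2)
end
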